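/- arXiv:2101.03639 — 7 statements merged into one kernel-verified Lean document; each statement's English description precedes it below -/
import Mathlib

section
/- Along any solution c of the Kepler-Heisenberg system, the angular momentum p_θ = x·p_y − y·p_x is conserved: the function t ↦ p_θ(c(t)) is constant on the interval of definition. -/
/-- `P_X = p_x - (1/2) y p_z`, where phase space coordinates are
`(x, y, z, p_x, p_y, p_z) = (p 0, p 1, p 2, p 3, p 4, p 5)`. -/
noncomputable def PX (p : Fin 6 → ℝ) : ℝ := p 3 - (1/2) * p 1 * p 5

/-- `P_Y = p_y + (1/2) x p_z`. -/
noncomputable def PY (p : Fin 6 → ℝ) : ℝ := p 4 + (1/2) * p 0 * p 5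

/-- `Q = (x² + y²)² + 16 z²`. -/
noncomputable def Qf (p : Fin 6 → ℝ) : ℝ := ((p 0)^2 + (p 1)^2)^2 + 16 * (p 2)^2

/-- The Kepler–Heisenberg Hamiltonian `H = (1/2)(P_X² + P_Y²) - (1/(8π)) Q^{-1/2}`. -/
noncomputable def Ham (p : Fin 6 → ℝ) : ℝ :=
  (1/2) * ((PX p)^2 + (PY p)^2) - (1/(8*Real.pi)) * (Qf p) ^ (-(1/2) : ℝ)

/-- A solution of the Kepler–Heisenberg system: a differentiable curve on an open
interval (open preconnected set) `I`, whose position component never vanishes, and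
which satisfies Hamilton's equations for `Ham`. -/
def IsSolutionOn (c : ℝ → Fin 6 → ℝ) (I : Set ℝ) : Prop :=
  IsOpen I ∧ IsPreconnected I ∧
  ∀ t ∈ I,
    (¬ (c t 0 = 0 ∧ c t 1 = 0 ∧ c t 2 = 0)) ∧
    HasDerivAt (fun τ => c τ 0) (fderiv ℝ Ham (c t) (Pi.single 3 1)) t ∧
    HasDerivAt (fun τ => c τ 1) (fderiv ℝ Ham (c t) (Pi.single 4 1)) t ∧
    HasDerivAt (fun τ => c τ 2) (fderiv ℝ Ham (c t) (Pi.single 5 1)) t ∧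
    HasDerivAt (fun τ => c τ 3) (-(fderiv ℝ Ham (c t) (Pi.single 0 1))) t ∧
    HasDerivAt (fun τ => c τ 4) (-(fderiv ℝ Ham (c t) (Pi.single 1 1))) t ∧
    HasDerivAt (fun τ => c τ 5) (-(fderiv ℝ Ham (c t) (Pi.single 2 1))) t

/-- The angular momentum `p_θ = x p_y - y p_x`. -/
noncomputable def ptheta (p : Fin 6 → ℝ) : ℝ := p 0 * p 4 - p 1 * p 3

/-! The Hamiltonian is invariant under rotating the `(x, y)` and `(p_x, p_y)` planes together,
and `p_θ` generates this rotation. By Hamilton's equations, `d p_θ / dt = -dH(w)`, where `w` is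
the velocity of the rotation at angle `0`; invariance makes `dH(w)` vanish. -/

theorem HasFDerivAt.apply_eq_zero_of_forall_comp_eq {E F : Type*}
    [NormedAddCommGroup E] [NormedSpace ℝ E] [NormedAddCommGroup F] [NormedSpace ℝ F]
    {f : E → F} {f' : E →L[ℝ] F} {γ : ℝ → E} {v : E}
    (hf : HasFDerivAt f f' (γ 0)) (hγ : HasDerivAt γ v 0) (hfγ : ∀ θ, f (γ θ) = f (γ 0)) :
    f' v = 0 := by
  have hcomp := hf.comp_hasDerivAt 0 hγ
  rw [show f ∘ γ = fun _ => f (γ 0) from funext hfγ] at hcomp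
  exact hcomp.unique (hasDerivAt_const 0 (f (γ 0)))

lemma Qf_ne_zero {q : Fin 6 → ℝ} (h : ¬ (q 0 = 0 ∧ q 1 = 0 ∧ q 2 = 0)) : Qf q ≠ 0 := by
  contrapose! h
  unfold Qf at h
  have hr : (q 0)^2 + (q 1)^2 = 0 := by nlinarith [sq_nonneg ((q 0)^2 + (q 1)^2), sq_nonneg (q 2)]
  refine ⟨?_, ?_, ?_⟩ <;> nlinarith [sq_nonneg (q 0), sq_nonneg (q 1), sq_nonneg (q 2)]

lemma differentiableAt_Ham {q : Fin 6 → ℝ} (hq : Qf q ≠ 0) : DifferentiableAt ℝ Ham q := by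
  unfold Ham PX PY
  have : DifferentiableAt ℝ Qf q := by unfold Qf; fun_prop
  fun_prop (disch := exact Or.inl hq)

noncomputable def rotZ (θ : ℝ) (q : Fin 6 → ℝ) : Fin 6 → ℝ :=
  ![Real.cos θ * q 0 - Real.sin θ * q 1, Real.sin θ * q 0 + Real.cos θ * q 1, q 2,
    Real.cos θ * q 3 - Real.sin θ * q 4, Real.sin θ * q 3 + Real.cos θ * q 4, q 5]

lemma Ham_rotZ (θ : ℝ) (q : Fin 6 → ℝ) : Ham (rotZ θ q) = Ham q := by
  have hc := Real.sin_sq_add_cos_sq θ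
  have hPX : PX (rotZ θ q) = Real.cos θ * PX q - Real.sin θ * PY q := by
    simp only [PX, PY, rotZ, Matrix.cons_val, Matrix.cons_val_zero, Matrix.cons_val_one]; ring
  have hPY : PY (rotZ θ q) = Real.sin θ * PX q + Real.cos θ * PY q := by
    simp only [PX, PY, rotZ, Matrix.cons_val, Matrix.cons_val_zero]; ring
  have hr : (rotZ θ q 0)^2 + (rotZ θ q 1)^2 = (q 0)^2 + (q 1)^2 := by
    simp only [rotZ, Matrix.cons_val_zero, Matrix.cons_val_one]
    linear_combination ((q 0)^2 + (q 1)^2) * hc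
  have hQ : Qf (rotZ θ q) = Qf q := by
    simp only [Qf, hr]; simp [rotZ]
  simp only [Ham, hPX, hPY, hQ]
  linear_combination (1/2) * ((PX q)^2 + (PY q)^2) * hc

lemma hasDerivAt_rotZ (q : Fin 6 → ℝ) :
    HasDerivAt (fun θ => rotZ θ q) ![-q 1, q 0, 0, -q 4, q 3, 0] 0 := by
  have hcos := (Real.hasDerivAt_cos 0).mul_const
  have hsin := (Real.hasDerivAt_sin 0).mul_const
  rw [hasDerivAt_pi]
  intro i
  fin_cases i
  · simpa [rotZ] using (hcos (q 0)).fun_sub (hsin (q 1))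
  · simpa [rotZ] using (hsin (q 0)).fun_add (hcos (q 1))
  · simpa [rotZ] using hasDerivAt_const (0 : ℝ) (q 2)
  · simpa [rotZ] using (hcos (q 3)).fun_sub (hsin (q 4))
  · simpa [rotZ] using (hsin (q 3)).fun_add (hcos (q 4))
  · simpa [rotZ] using hasDerivAt_const (0 : ℝ) (q 5)

lemma fderiv_Ham_rotZ_generator {q : Fin 6 → ℝ} (hq : Qf q ≠ 0) :
    fderiv ℝ Ham q ![-q 1, q 0, 0, -q 4, q 3, 0] = 0 := by
  have hrot0 : rotZ 0 q = q := by
    ext i; fin_cases i <;> simp [rotZ]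
  refine HasFDerivAt.apply_eq_zero_of_forall_comp_eq (γ := fun θ => rotZ θ q) ?_
    (hasDerivAt_rotZ q) fun θ => (Ham_rotZ θ q).trans (Ham_rotZ 0 q).symm
  rw [hrot0]
  exact (differentiableAt_Ham hq).hasFDerivAt

lemma IsSolutionOn.hasDerivAt_ptheta {c : ℝ → Fin 6 → ℝ} {I : Set ℝ} (hc : IsSolutionOn c I)
    {t : ℝ} (ht : t ∈ I) : HasDerivAt (fun τ => ptheta (c τ)) 0 t := by
  obtain ⟨hne, hx, hy, -, hpx, hpy, -⟩ := hc.2.2 t ht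
  have hgen : ![-c t 1, c t 0, 0, -c t 4, c t 3, 0] =
      (-c t 1) • Pi.single 0 1 + c t 0 • Pi.single 1 1 + (-c t 4) • Pi.single 3 1
        + c t 3 • Pi.single 4 1 := by
    ext i; fin_cases i <;> simp
  have hL := fderiv_Ham_rotZ_generator (Qf_ne_zero hne)
  rw [hgen] at hL
  simp only [map_add, map_smul, smul_eq_mul] at hL
  refine ((hx.fun_mul hpy).fun_sub (hy.fun_mul hpx)).congr_deriv ?_
  linear_combination -hL

/-- Along any solution of the Kepler–Heisenberg system, the angular momentum
`p_θ = x p_y - y p_x` is conserved. -/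
theorem kh_angular_momentum_conserved (c : ℝ → Fin 6 → ℝ) (I : Set ℝ)
    (hc : IsSolutionOn c I) :
    ∀ t₁ ∈ I, ∀ t₂ ∈ I, ptheta (c t₁) = ptheta (c t₂) := by
  intro t₁ h₁ t₂ h₂
  have hderiv := fun t (ht : t ∈ I) => hc.hasDerivAt_ptheta ht
  exact hc.1.is_const_of_deriv_eq_zero hc.2.1
    (fun t ht => (hderiv t ht).differentiableAt.differentiableWithinAt)
    (fun t ht => (hderiv t ht).deriv) h₁ h₂
end

section
/- Every periodic solution of the Kepler-Heisenberg system has zero energy: if c : ℝ → ℝ⁶ is a solution and there exists T > 0 with c(t + T) = c(t) for all t, then H(c(t)) = 0 for all t. -/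
set_option maxHeartbeats 1000000

noncomputable def gQ (p : Fin 6 → ℝ) : ℝ := (1/(16*Real.pi)) * (Qf p) ^ (-(3/2) : ℝ)

/-- The gradient of `Ham`. -/
noncomputable def dH (p : Fin 6 → ℝ) : Fin 6 → ℝ :=
  ![PY p * ((1/2) * p 5) + gQ p * (4 * p 0 * ((p 0)^2 + (p 1)^2)),
    PX p * (-(1/2) * p 5) + gQ p * (4 * p 1 * ((p 0)^2 + (p 1)^2)),
    gQ p * (32 * p 2),
    PX p,
    PY p,
    PX p * (-(1/2) * p 1) + PY p * ((1/2) * p 0)]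

lemma vec6_0 (a b c d e f : ℝ) : (![a,b,c,d,e,f] : Fin 6 → ℝ) 0 = a := rfl
lemma vec6_1 (a b c d e f : ℝ) : (![a,b,c,d,e,f] : Fin 6 → ℝ) 1 = b := rfl
lemma vec6_2 (a b c d e f : ℝ) : (![a,b,c,d,e,f] : Fin 6 → ℝ) 2 = c := rfl
lemma vec6_3 (a b c d e f : ℝ) : (![a,b,c,d,e,f] : Fin 6 → ℝ) 3 = d := rfl
lemma vec6_4 (a b c d e f : ℝ) : (![a,b,c,d,e,f] : Fin 6 → ℝ) 4 = e := rfl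
lemma vec6_5 (a b c d e f : ℝ) : (![a,b,c,d,e,f] : Fin 6 → ℝ) 5 = f := rfl

lemma Qf_pos (p : Fin 6 → ℝ) (h : ¬ (p 0 = 0 ∧ p 1 = 0 ∧ p 2 = 0)) : 0 < Qf p := by
  rcases lt_or_eq_of_le (show (0:ℝ) ≤ Qf p by unfold Qf; positivity) with h' | h'
  · exact h'
  · exfalso
    apply h
    have h0 : p 0 ^ 2 + p 1 ^ 2 = 0 ∧ p 2 = 0 := by
      unfold Qf at h'
      constructor <;> nlinarith [sq_nonneg (p 0 ^ 2 + p 1 ^ 2), sq_nonneg (p 2)]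
    have h1 : p 0 = 0 ∧ p 1 = 0 := by
      constructor <;> nlinarith [h0.1, sq_nonneg (p 0), sq_nonneg (p 1)]
    exact ⟨h1.1, h1.2, h0.2⟩

lemma ham_hasFDerivAt (p : Fin 6 → ℝ) (hp : Qf p ≠ 0) :
    ∃ L : (Fin 6 → ℝ) →L[ℝ] ℝ, HasFDerivAt Ham L p ∧ ∀ i, L (Pi.single i 1) = dH p i := by
  have hx := fun i : Fin 6 => hasFDerivAt_apply (𝕜 := ℝ) i p
  have hPX : HasFDerivAt PX _ p := (hx 3).sub (((hx 1).const_mul (1/2 : ℝ)).mul (hx 5))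
  have hPY : HasFDerivAt PY _ p := (hx 4).add (((hx 0).const_mul (1/2 : ℝ)).mul (hx 5))
  have sq : ∀ (f : (Fin 6 → ℝ) → ℝ) (L : (Fin 6 → ℝ) →L[ℝ] ℝ) (_ : HasFDerivAt f L p),
      HasFDerivAt (fun q => f q ^ 2) ((2 * f p ^ 1) • L) p := fun f L hf =>
    (hasDerivAt_pow 2 (f p)).comp_hasFDerivAt p hf
  have hQ : HasFDerivAt Qf _ p :=
    (sq _ _ ((sq _ _ (hx 0)).add (sq _ _ (hx 1)))).add ((sq _ _ (hx 2)).const_mul 16)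
  have hrpow := (Real.hasDerivAt_rpow_const (x := Qf p) (p := (-(1/2) : ℝ))
      (Or.inl hp)).comp_hasFDerivAt p hQ
  have hH : HasFDerivAt Ham _ p :=
    (((sq _ _ hPX).add (sq _ _ hPY)).const_mul (1/2 : ℝ)).sub
      (hrpow.const_mul (1/(8*Real.pi)))
  refine ⟨_, hH, fun i => ?_⟩
  have e1 : (-(1/2) : ℝ) - 1 = -(3/2) := by norm_num
  fin_cases i <;>
    · simp only [ContinuousLinearMap.sub_apply, ContinuousLinearMap.add_apply,
        ContinuousLinearMap.smul_apply, ContinuousLinearMap.coe_smul', Pi.smul_apply,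
        ContinuousLinearMap.proj_apply, smul_eq_mul, Pi.single_apply, e1]
      norm_num [dH, gQ, PX, PY, Qf, Fin.ext_iff,
        show ((0:Fin 6).val)=0 from rfl, show ((1:Fin 6).val)=1 from rfl,
        show ((2:Fin 6).val)=2 from rfl, show ((3:Fin 6).val)=3 from rfl,
        show ((4:Fin 6).val)=4 from rfl, show ((5:Fin 6).val)=5 from rfl]
      ring

lemma ham_fderiv (p : Fin 6 → ℝ) (hp : Qf p ≠ 0) (i : Fin 6) :
    fderiv ℝ Ham p (Pi.single i 1) = dH p i := by
  obtain ⟨L, hL, hLi⟩ := ham_hasFDerivAt p hp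
  rw [hL.fderiv]; exact hLi i

/-- virial identity: the Poisson bracket of J with H equals 2H. -/
lemma virial (p : Fin 6 → ℝ) (hp : 0 < Qf p) :
    dH p 3 * p 3 + p 0 * (-(dH p 0)) + dH p 4 * p 4 + p 1 * (-(dH p 1)) +
      2 * (dH p 5 * p 5 + p 2 * (-(dH p 2))) = 2 * Ham p := by
  have hq : (Qf p) ^ (-(3/2) : ℝ) * Qf p = (Qf p) ^ (-(1/2) : ℝ) := by
    nth_rewrite 2 [← Real.rpow_one (Qf p)]
    rw [← Real.rpow_add hp]
    norm_num
  simp only [dH, vec6_0, vec6_1, vec6_2, vec6_3, vec6_4, vec6_5, gQ, Ham, PX, PY, Qf] at *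
  linear_combination (-(1/(4*Real.pi))) * hq

/-- energy conservation cross-term identity. -/
lemma cons_identity (p : Fin 6 → ℝ) :
    dH p 0 * (dH p 3) + dH p 1 * (dH p 4) + dH p 2 * (dH p 5) +
      dH p 3 * (-(dH p 0)) + dH p 4 * (-(dH p 1)) + dH p 5 * (-(dH p 2)) = 0 := by ring

/-- Every periodic solution of the Kepler–Heisenberg system has zero energy. -/
theorem kh_periodic_zero_energy (c : ℝ → Fin 6 → ℝ)
    (hc : IsSolutionOn c Set.univ) (T : ℝ) (hT : 0 < T)
    (hper : ∀ t, c (t + T) = c t) :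
    ∀ t, Ham (c t) = 0 := by
  obtain ⟨-, -, hsol⟩ := hc
  have hQpos : ∀ t, 0 < Qf (c t) := fun t => Qf_pos _ (hsol t trivial).1
  have hQne : ∀ t, Qf (c t) ≠ 0 := fun t => (hQpos t).ne'
  -- rewrite Hamilton's equations using dH
  have h0 : ∀ t, HasDerivAt (fun τ => c τ 0) (dH (c t) 3) t := fun t => by
    have := (hsol t trivial).2.1; rwa [ham_fderiv _ (hQne t)] at this
  have h1 : ∀ t, HasDerivAt (fun τ => c τ 1) (dH (c t) 4) t := fun t => by
    have := (hsol t trivial).2.2.1; rwa [ham_fderiv _ (hQne t)] at this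
  have h2 : ∀ t, HasDerivAt (fun τ => c τ 2) (dH (c t) 5) t := fun t => by
    have := (hsol t trivial).2.2.2.1; rwa [ham_fderiv _ (hQne t)] at this
  have h3 : ∀ t, HasDerivAt (fun τ => c τ 3) (-(dH (c t) 0)) t := fun t => by
    have := (hsol t trivial).2.2.2.2.1; rwa [ham_fderiv _ (hQne t)] at this
  have h4 : ∀ t, HasDerivAt (fun τ => c τ 4) (-(dH (c t) 1)) t := fun t => by
    have := (hsol t trivial).2.2.2.2.2.1; rwa [ham_fderiv _ (hQne t)] at this
  have h5 : ∀ t, HasDerivAt (fun τ => c τ 5) (-(dH (c t) 2)) t := fun t => by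
    have := (hsol t trivial).2.2.2.2.2.2; rwa [ham_fderiv _ (hQne t)] at this
  -- the velocity vector
  set v : ℝ → Fin 6 → ℝ := fun t =>
    ![dH (c t) 3, dH (c t) 4, dH (c t) 5, -(dH (c t) 0), -(dH (c t) 1), -(dH (c t) 2)] with hv
  have hcv : ∀ t, HasDerivAt c (v t) t := by
    intro t
    rw [hasDerivAt_pi]
    intro i
    fin_cases i <;>
      simp only [hv, vec6_0, vec6_1, vec6_2, vec6_3, vec6_4, vec6_5]
    exacts [h0 t, h1 t, h2 t, h3 t, h4 t, h5 t]
  -- energy is conserved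
  have hEderiv : ∀ t, HasDerivAt (fun τ => Ham (c τ)) 0 t := by
    intro t
    obtain ⟨L, hL, hLi⟩ := ham_hasFDerivAt (c t) (hQne t)
    have hcomp := hL.comp_hasDerivAt t (hcv t)
    have hvsum : v t = ∑ i : Fin 6, v t i • (Pi.single i (1:ℝ) : Fin 6 → ℝ) := by
      funext j
      simp [Pi.single_apply, Finset.sum_ite_eq', Finset.mem_univ]
    have : L (v t) = 0 := by
      rw [hvsum, map_sum]
      simp only [map_smul, smul_eq_mul, hLi]
      rw [Fin.sum_univ_six]
      simp only [hv, vec6_0, vec6_1, vec6_2, vec6_3, vec6_4, vec6_5]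
      ring
    rwa [this] at hcomp
  have hEconst : ∀ t, Ham (c t) = Ham (c 0) := by
    intro t
    exact is_const_of_deriv_eq_zero (fun s => (hEderiv s).differentiableAt)
      (fun s => (hEderiv s).deriv) t 0
  set E := Ham (c 0) with hE
  -- the dilation function J and its derivative
  have hJ : ∀ t, HasDerivAt
      (fun τ => c τ 0 * c τ 3 + c τ 1 * c τ 4 + 2 * (c τ 2 * c τ 5) - 2 * E * τ) 0 t := by
    intro t
    have hprod := (((h0 t).mul (h3 t)).add ((h1 t).mul (h4 t))).add
      (((h2 t).mul (h5 t)).const_mul 2)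
    have hlin : HasDerivAt (fun τ : ℝ => 2 * E * τ) (2 * E) t := by
      simpa using (hasDerivAt_id t).const_mul (2 * E)
    have := hprod.sub hlin
    have hval : dH (c t) 3 * c t 3 + c t 0 * (-(dH (c t) 0)) +
        (dH (c t) 4 * c t 4 + c t 1 * (-(dH (c t) 1))) +
        2 * (dH (c t) 5 * c t 5 + c t 2 * (-(dH (c t) 2))) - 2 * E = 0 := by
      have hvir := virial (c t) (hQpos t)
      rw [hEconst t] at hvir
      linarith [hvir]
    rwa [hval] at this
  -- J is constant, so E = 0 by periodicity
  have hJconst := is_const_of_deriv_eq_zero (f := fun τ =>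
      c τ 0 * c τ 3 + c τ 1 * c τ 4 + 2 * (c τ 2 * c τ 5) - 2 * E * τ)
    (fun s => (hJ s).differentiableAt) (fun s => (hJ s).deriv) T 0
  have hcT : c T = c 0 := by have := hper 0; rwa [zero_add] at this
  rw [hcT] at hJconst
  have hET : 2 * E * T = 0 := by linarith [hJconst]
  have hE0 : E = 0 := by
    rcases mul_eq_zero.1 hET with h | h
    · rcases mul_eq_zero.1 h with h' | h'
      · norm_num at h'
      · exact h'
    · exact absurd h hT.ne'
  intro t
  rw [hEconst t, hE0]
end

section
/- Heisenberg dilations map solutions to solutions after a quadratic time rescaling: if c : I → ℝ⁶ is a solution of the Kepler-Heisenberg system and λ > 0, then the curve c_λ defined by c_λ(t) = D_λ(c(t/λ²)) (on the correspondingly rescaled interval) is also a solution of the Kepler-Heisenberg system. -/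
/-- The Heisenberg dilation `D_λ` on phase space. -/
noncomputable def Dil (l : ℝ) (p : Fin 6 → ℝ) : Fin 6 → ℝ :=
  ![l * p 0, l * p 1, l^2 * p 2, l⁻¹ * p 3, l⁻¹ * p 4, (l^2)⁻¹ * p 5]

/-- The rotation `R_φ` about the `z`-axis on phase space. -/
noncomputable def Rot (φ : ℝ) (p : Fin 6 → ℝ) : Fin 6 → ℝ :=
  ![p 0 * Real.cos φ - p 1 * Real.sin φ, p 0 * Real.sin φ + p 1 * Real.cos φ, p 2,
    p 3 * Real.cos φ - p 4 * Real.sin φ, p 3 * Real.sin φ + p 4 * Real.cos φ, p 5]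

/-! The Hamiltonian is homogeneous of degree `-2` for the dilation: `H ∘ D_λ = λ⁻² H`.
`D_λ` is the diagonal linear map with weights `w = (λ, λ, λ², λ⁻¹, λ⁻¹, λ⁻²)`, and conjugate
coordinates have reciprocal weights, `w i * w (i + 3) = 1`. Differentiating the homogeneity
identity along the linear map `D_λ` gives `∂ⱼH(D_λ p) = λ⁻² (w j)⁻¹ ∂ⱼH(p)`, and for `j = i + 3`
this is `w i / λ²` times `∂ⱼH(p)`: precisely the factor the chain rule produces when
differentiating `t ↦ w i * cᵢ(t / λ²)`. No explicit formula for the gradient of `H` is needed. -/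

theorem fderiv_apply_map_of_comp_eq_smul {𝕜 E F : Type*} [NontriviallyNormedField 𝕜]
    [NormedAddCommGroup E] [NormedSpace 𝕜 E] [NormedAddCommGroup F] [NormedSpace 𝕜 F]
    {f : E → F} (A : E ≃L[𝕜] E) {μ : 𝕜} (hf : f ∘ A = μ • f) (x v : E) :
    fderiv 𝕜 f (A x) (A v) = μ • fderiv 𝕜 f x v := by
  have h := A.comp_right_fderiv (f := f) (x := x)
  rw [hf, fderiv_const_smul_field] at h
  exact (DFunLike.congr_fun h v).symm

theorem HasDerivAt.const_mul_comp_div_const {𝕜 : Type*} [NontriviallyNormedField 𝕜]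
    {f : 𝕜 → 𝕜} {d s : 𝕜} (hf : HasDerivAt f d s) (k : 𝕜) {a : 𝕜} (ha : a ≠ 0) :
    HasDerivAt (fun τ => k * f (τ / a)) (k * d / a) (a * s) := by
  have hf' : HasDerivAt f d (a * s / a) := by rwa [mul_div_cancel_left₀ s ha]
  simpa [div_eq_mul_inv, mul_assoc] using
    (hf'.comp (a * s) ((hasDerivAt_id _).div_const a)).const_mul k

variable {l : ℝ}

noncomputable def dilWeight (l : ℝ) : Fin 6 → ℝ := ![l, l, l^2, l⁻¹, l⁻¹, (l^2)⁻¹]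

theorem Dil_apply (l : ℝ) (p : Fin 6 → ℝ) (i : Fin 6) : Dil l p i = dilWeight l i * p i := by
  fin_cases i <;> rfl

theorem dilWeight_ne_zero (hl : l ≠ 0) (i : Fin 6) : dilWeight l i ≠ 0 := by
  fin_cases i <;> simp [dilWeight, hl]

theorem dilWeight_mul_dilWeight_add_three (hl : l ≠ 0) (i : Fin 6) :
    dilWeight l i * dilWeight l (i + 3) = 1 := by
  fin_cases i <;> simp [dilWeight, hl]

noncomputable def dilEquiv (hl : l ≠ 0) : (Fin 6 → ℝ) ≃L[ℝ] (Fin 6 → ℝ) :=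
  ContinuousLinearEquiv.piCongrRight fun i =>
    ContinuousLinearEquiv.smulLeft (Units.mk0 (dilWeight l i) (dilWeight_ne_zero hl i))

theorem coe_dilEquiv (hl : l ≠ 0) : ⇑(dilEquiv hl) = Dil l := by
  funext p i
  simp [dilEquiv, Dil_apply, Units.smul_def]

theorem Dil_single (l : ℝ) (j : Fin 6) (a : ℝ) :
    Dil l (Pi.single j a) = Pi.single j (dilWeight l j * a) := by
  funext i
  rcases eq_or_ne i j with rfl | h
  · simp [Dil_apply]
  · simp [Dil_apply, h]

theorem PX_Dil (hl : l ≠ 0) (p : Fin 6 → ℝ) : PX (Dil l p) = l⁻¹ * PX p := by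
  simp [PX, Dil_apply, dilWeight]
  field_simp

theorem PY_Dil (hl : l ≠ 0) (p : Fin 6 → ℝ) : PY (Dil l p) = l⁻¹ * PY p := by
  simp [PY, Dil_apply, dilWeight]
  field_simp

theorem Qf_Dil (l : ℝ) (p : Fin 6 → ℝ) : Qf (Dil l p) = (l ^ 2) ^ 2 * Qf p := by
  simp [Qf, Dil_apply, dilWeight]
  ring

theorem Qf_nonneg (p : Fin 6 → ℝ) : 0 ≤ Qf p := by
  unfold Qf; positivity

theorem Ham_Dil (hl : l ≠ 0) (p : Fin 6 → ℝ) : Ham (Dil l p) = (l ^ 2)⁻¹ * Ham p := by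
  have hpot : Qf (Dil l p) ^ (-(1/2) : ℝ) = (l ^ 2)⁻¹ * Qf p ^ (-(1/2) : ℝ) := by
    rw [Qf_Dil, Real.mul_rpow (by positivity) (Qf_nonneg p),
      ← Real.rpow_natCast_mul (by positivity),
      show ((2 : ℕ) : ℝ) * (-(1/2)) = -1 by norm_num, Real.rpow_neg_one]
  rw [Ham, Ham, PX_Dil hl, PY_Dil hl, hpot]
  field_simp

theorem fderiv_Ham_Dil_single (hl : l ≠ 0) (p : Fin 6 → ℝ) (j : Fin 6) :
    fderiv ℝ Ham (Dil l p) (Pi.single j 1) =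
      (l ^ 2)⁻¹ * (dilWeight l j)⁻¹ * fderiv ℝ Ham p (Pi.single j 1) := by
  have hHam : Ham ∘ dilEquiv hl = (l ^ 2)⁻¹ • Ham := by
    funext p; simp [coe_dilEquiv, Ham_Dil hl]
  have hv : dilEquiv hl ((dilWeight l j)⁻¹ • Pi.single j 1) = Pi.single j 1 := by
    rw [map_smul, coe_dilEquiv, Dil_single, mul_one, ← Pi.single_smul', smul_eq_mul,
      inv_mul_cancel₀ (dilWeight_ne_zero hl j)]
  have h := fderiv_apply_map_of_comp_eq_smul (dilEquiv hl) hHam p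
    ((dilWeight l j)⁻¹ • Pi.single j 1)
  rw [hv, coe_dilEquiv, map_smul, smul_eq_mul, smul_eq_mul] at h
  rw [h, mul_assoc]

theorem fderiv_Ham_Dil_single_add_three (hl : l ≠ 0) (p : Fin 6 → ℝ) (i : Fin 6) :
    fderiv ℝ Ham (Dil l p) (Pi.single (i + 3) 1) =
      dilWeight l i * fderiv ℝ Ham p (Pi.single (i + 3) 1) / l ^ 2 := by
  rw [fderiv_Ham_Dil_single hl,
    ← eq_inv_of_mul_eq_one_left (dilWeight_mul_dilWeight_add_three hl i)]
  field_simp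

theorem hasDerivAt_Dil_comp_div (c : ℝ → Fin 6 → ℝ) (hl : l ≠ 0) {i : Fin 6} {d s : ℝ}
    (h : HasDerivAt (fun τ => c τ i) d s) :
    HasDerivAt (fun τ => Dil l (c (τ / l ^ 2)) i) (dilWeight l i * d / l ^ 2) (l ^ 2 * s) := by
  simp only [Dil_apply]
  exact h.const_mul_comp_div_const _ (pow_ne_zero 2 hl)

/-- Heisenberg dilations map solutions to solutions after a quadratic time rescaling:
if `c` is a solution on `I` and `λ > 0`, then `t ↦ D_λ(c(t/λ²))` is a solution on the
rescaled interval `λ² • I`. -/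
theorem kh_dilation_of_solution (c : ℝ → Fin 6 → ℝ) (I : Set ℝ)
    (hc : IsSolutionOn c I) (l : ℝ) (hl : 0 < l) :
    IsSolutionOn (fun t => Dil l (c (t / l^2))) ((fun t => l^2 * t) '' I) := by
  obtain ⟨hIopen, hIconn, hI⟩ := hc
  have hl2 : l ^ 2 ≠ 0 := by positivity
  refine ⟨(Homeomorph.mulLeft₀ _ hl2).isOpenMap I hIopen,
    hIconn.image _ (continuous_const_mul _).continuousOn, ?_⟩
  rintro _ ⟨s, hs, rfl⟩
  obtain ⟨hnz, hd0, hd1, hd2, hd3, hd4, hd5⟩ := hI s hs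
  beta_reduce
  rw [mul_div_cancel_left₀ s hl2]
  have position (i : Fin 6)
      (h : HasDerivAt (fun τ => c τ i) (fderiv ℝ Ham (c s) (Pi.single (i + 3) 1)) s) :
      HasDerivAt (fun τ => Dil l (c (τ / l ^ 2)) i)
        (fderiv ℝ Ham (Dil l (c s)) (Pi.single (i + 3) 1)) (l ^ 2 * s) := by
    rw [fderiv_Ham_Dil_single_add_three hl.ne']
    exact hasDerivAt_Dil_comp_div c hl.ne' h
  have momentum (i : Fin 6)
      (h : HasDerivAt (fun τ => c τ i) (-fderiv ℝ Ham (c s) (Pi.single (i + 3) 1)) s) :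
      HasDerivAt (fun τ => Dil l (c (τ / l ^ 2)) i)
        (-fderiv ℝ Ham (Dil l (c s)) (Pi.single (i + 3) 1)) (l ^ 2 * s) := by
    rw [fderiv_Ham_Dil_single_add_three hl.ne', ← neg_div, neg_mul_eq_mul_neg]
    exact hasDerivAt_Dil_comp_div c hl.ne' h
  -- indices live in `Fin 6`, so `momentum 3` pairs `p_x` with `(3 + 3 : Fin 6) = 0`
  refine ⟨fun h0 => hnz ?_, position 0 hd0, position 1 hd1, position 2 hd2,
    momentum 3 hd3, momentum 4 hd4, momentum 5 hd5⟩
  simpa [Dil_apply, dilWeight, hl.ne'] using h0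
end

section
/- Rotations about the z-axis map solutions to solutions: if c : I → ℝ⁶ is a solution of the Kepler-Heisenberg system and φ ∈ ℝ, then the curve R_φ ∘ c, where R_φ rotates the pair (x, y) and the pair (p_x, p_y) each by angle φ and fixes z and p_z, is also a solution of the Kepler-Heisenberg system. -/
set_option linter.unreachableTactic false
set_option linter.unusedTactic false

lemma cons_val_five' {α : Type*} (a b c d e f : α) :
    (![a,b,c,d,e,f] : Fin 6 → α) 5 = f := rfl

lemma Rot0 (φ : ℝ) (p : Fin 6 → ℝ) : Rot φ p 0 = p 0 * Real.cos φ - p 1 * Real.sin φ := rfl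
lemma Rot1 (φ : ℝ) (p : Fin 6 → ℝ) : Rot φ p 1 = p 0 * Real.sin φ + p 1 * Real.cos φ := rfl
lemma Rot2 (φ : ℝ) (p : Fin 6 → ℝ) : Rot φ p 2 = p 2 := rfl
lemma Rot3 (φ : ℝ) (p : Fin 6 → ℝ) : Rot φ p 3 = p 3 * Real.cos φ - p 4 * Real.sin φ := rfl
lemma Rot4 (φ : ℝ) (p : Fin 6 → ℝ) : Rot φ p 4 = p 3 * Real.sin φ + p 4 * Real.cos φ := rfl
lemma Rot5 (φ : ℝ) (p : Fin 6 → ℝ) : Rot φ p 5 = p 5 := rfl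

lemma Qf_rot (φ : ℝ) (p : Fin 6 → ℝ) : Qf (Rot φ p) = Qf p := by
  simp only [Qf, Rot0, Rot1, Rot2]
  linear_combination ((p 0 ^ 2 + p 1 ^ 2) ^ 2 * (Real.sin φ ^ 2 + Real.cos φ ^ 2 + 1))
    * (Real.sin_sq_add_cos_sq φ)

lemma PX_rot (φ : ℝ) (p : Fin 6 → ℝ) :
    PX (Rot φ p) = Real.cos φ * PX p - Real.sin φ * PY p := by
  simp only [PX, PY, Rot1, Rot3, Rot5]; ring

lemma PY_rot (φ : ℝ) (p : Fin 6 → ℝ) :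
    PY (Rot φ p) = Real.sin φ * PX p + Real.cos φ * PY p := by
  simp only [PX, PY, Rot0, Rot4, Rot5]; ring

lemma Ham_rot (φ : ℝ) (p : Fin 6 → ℝ) : Ham (Rot φ p) = Ham p := by
  unfold Ham
  rw [Qf_rot, PX_rot, PY_rot]
  have h := Real.sin_sq_add_cos_sq φ
  have hk : (Real.cos φ * PX p - Real.sin φ * PY p) ^ 2
      + (Real.sin φ * PX p + Real.cos φ * PY p) ^ 2 = PX p ^ 2 + PY p ^ 2 := by
    linear_combination (PX p ^ 2 + PY p ^ 2) * h
  rw [hk]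

noncomputable def RotL (φ : ℝ) : (Fin 6 → ℝ) →L[ℝ] (Fin 6 → ℝ) :=
  LinearMap.toContinuousLinearMap
    { toFun := Rot φ
      map_add' := by intro p q; funext i; fin_cases i <;> simp [Rot, cons_val_five'] <;> ring
      map_smul' := by intro a p; funext i; fin_cases i <;> simp [Rot, cons_val_five'] <;> ring }

lemma Qf_ne (p : Fin 6 → ℝ) (h : ¬ (p 0 = 0 ∧ p 1 = 0 ∧ p 2 = 0)) : Qf p ≠ 0 := by
  intro hq
  apply h
  unfold Qf at hq
  have h2 : p 2 = 0 := by
    nlinarith [sq_nonneg (p 0 ^ 2 + p 1 ^ 2), sq_nonneg (p 2)]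
  have hsum : p 0 ^ 2 + p 1 ^ 2 = 0 := by
    nlinarith [sq_nonneg (p 0), sq_nonneg (p 1), sq_nonneg (p 2),
      sq_nonneg (p 0 ^ 2 + p 1 ^ 2)]
  have h0 : p 0 = 0 := by
    have : p 0 ^ 2 = 0 := by nlinarith [sq_nonneg (p 1)]
    exact pow_eq_zero_iff two_ne_zero |>.mp this
  have h1 : p 1 = 0 := by
    have : p 1 ^ 2 = 0 := by nlinarith [sq_nonneg (p 0)]
    exact pow_eq_zero_iff two_ne_zero |>.mp this
  exact ⟨h0, h1, h2⟩

lemma diff_Ham (p : Fin 6 → ℝ) (hp : Qf p ≠ 0) : DifferentiableAt ℝ Ham p := by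
  have hQ : DifferentiableAt ℝ Qf p := by unfold Qf; fun_prop
  have h1 : DifferentiableAt ℝ (fun q => Qf q ^ (-(1/2) : ℝ)) p :=
    hQ.rpow_const (Or.inl hp)
  have h2 : DifferentiableAt ℝ (fun q => (1/2 : ℝ) * (PX q ^ 2 + PY q ^ 2)) p := by
    unfold PX PY; fun_prop
  exact h2.sub ((differentiableAt_const _).mul h1)

lemma fderiv_Ham_rot (φ : ℝ) (p : Fin 6 → ℝ) (hp : Qf p ≠ 0) (v : Fin 6 → ℝ) :
    fderiv ℝ Ham (Rot φ p) (Rot φ v) = fderiv ℝ Ham p v := by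
  have hQr : Qf (Rot φ p) ≠ 0 := by rw [Qf_rot]; exact hp
  have hd : DifferentiableAt ℝ Ham (Rot φ p) := diff_Ham _ hQr
  have hcomp : Ham ∘ (RotL φ) = Ham := funext fun q => Ham_rot φ q
  have hR : HasFDerivAt Ham (fderiv ℝ Ham (Rot φ p)) ((RotL φ) p) := hd.hasFDerivAt
  have h2 := hR.comp p (RotL φ).hasFDerivAt
  rw [hcomp] at h2
  rw [h2.fderiv]
  rfl

section rotsingle

variable (φ : ℝ)

lemma rot_single0 :
    Rot φ (Real.cos φ • (Pi.single 0 1 : Fin 6 → ℝ) - Real.sin φ • (Pi.single 1 1 : Fin 6 → ℝ))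
      = (Pi.single 0 1 : Fin 6 → ℝ) := by
  funext j; fin_cases j <;>
    simp [Rot, cons_val_five', Pi.single_apply] <;>
    first
      | ring1
      | linear_combination Real.sin_sq_add_cos_sq φ
      | linear_combination -Real.sin_sq_add_cos_sq φ

lemma rot_single1 :
    Rot φ (Real.sin φ • (Pi.single 0 1 : Fin 6 → ℝ) + Real.cos φ • (Pi.single 1 1 : Fin 6 → ℝ))
      = (Pi.single 1 1 : Fin 6 → ℝ) := by
  funext j; fin_cases j <;>
    simp [Rot, cons_val_five', Pi.single_apply] <;>
    first
      | ring1
      | linear_combination Real.sin_sq_add_cos_sq φ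
      | linear_combination -Real.sin_sq_add_cos_sq φ

lemma rot_single2 :
    Rot φ ((Pi.single 2 1 : Fin 6 → ℝ)) = (Pi.single 2 1 : Fin 6 → ℝ) := by
  funext j; fin_cases j <;>
    simp [Rot, cons_val_five', Pi.single_apply]

lemma rot_single3 :
    Rot φ (Real.cos φ • (Pi.single 3 1 : Fin 6 → ℝ) - Real.sin φ • (Pi.single 4 1 : Fin 6 → ℝ))
      = (Pi.single 3 1 : Fin 6 → ℝ) := by
  funext j; fin_cases j <;>
    simp [Rot, cons_val_five', Pi.single_apply] <;>
    first
      | ring1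
      | linear_combination Real.sin_sq_add_cos_sq φ
      | linear_combination -Real.sin_sq_add_cos_sq φ

lemma rot_single4 :
    Rot φ (Real.sin φ • (Pi.single 3 1 : Fin 6 → ℝ) + Real.cos φ • (Pi.single 4 1 : Fin 6 → ℝ))
      = (Pi.single 4 1 : Fin 6 → ℝ) := by
  funext j; fin_cases j <;>
    simp [Rot, cons_val_five', Pi.single_apply] <;>
    first
      | ring1
      | linear_combination Real.sin_sq_add_cos_sq φ
      | linear_combination -Real.sin_sq_add_cos_sq φ

lemma rot_single5 :
    Rot φ ((Pi.single 5 1 : Fin 6 → ℝ)) = (Pi.single 5 1 : Fin 6 → ℝ) := by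
  funext j; fin_cases j <;>
    simp [Rot, cons_val_five', Pi.single_apply]

end rotsingle

/-- Rotations about the `z`-axis map solutions of the Kepler–Heisenberg system to
solutions. -/
theorem kh_rotation_of_solution (c : ℝ → Fin 6 → ℝ) (I : Set ℝ)
    (hc : IsSolutionOn c I) (φ : ℝ) :
    IsSolutionOn (fun t => Rot φ (c t)) I := by
  obtain ⟨hI, hIc, h⟩ := hc
  refine ⟨hI, hIc, fun t ht => ?_⟩
  obtain ⟨hnz, h0, h1, h2, h3, h4, h5⟩ := h t ht
  have hQ : Qf (c t) ≠ 0 := Qf_ne _ hnz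
  have E := fderiv_Ham_rot φ (c t) hQ
  set A0 := fderiv ℝ Ham (c t) (Pi.single 0 1) with hA0
  set A1 := fderiv ℝ Ham (c t) (Pi.single 1 1) with hA1
  set A2 := fderiv ℝ Ham (c t) (Pi.single 2 1) with hA2
  set A3 := fderiv ℝ Ham (c t) (Pi.single 3 1) with hA3
  set A4 := fderiv ℝ Ham (c t) (Pi.single 4 1) with hA4
  set A5 := fderiv ℝ Ham (c t) (Pi.single 5 1) with hA5
  have k0 : fderiv ℝ Ham (Rot φ (c t)) (Pi.single 0 1)
      = Real.cos φ * A0 - Real.sin φ * A1 := by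
    rw [← rot_single0 φ, E, map_sub, map_smul, map_smul, smul_eq_mul, smul_eq_mul]
  have k1 : fderiv ℝ Ham (Rot φ (c t)) (Pi.single 1 1)
      = Real.sin φ * A0 + Real.cos φ * A1 := by
    rw [← rot_single1 φ, E, map_add, map_smul, map_smul, smul_eq_mul, smul_eq_mul]
  have k2 : fderiv ℝ Ham (Rot φ (c t)) (Pi.single 2 1) = A2 := by
    rw [← rot_single2 φ, E]
  have k3 : fderiv ℝ Ham (Rot φ (c t)) (Pi.single 3 1)
      = Real.cos φ * A3 - Real.sin φ * A4 := by
    rw [← rot_single3 φ, E, map_sub, map_smul, map_smul, smul_eq_mul, smul_eq_mul]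
  have k4 : fderiv ℝ Ham (Rot φ (c t)) (Pi.single 4 1)
      = Real.sin φ * A3 + Real.cos φ * A4 := by
    rw [← rot_single4 φ, E, map_add, map_smul, map_smul, smul_eq_mul, smul_eq_mul]
  have k5 : fderiv ℝ Ham (Rot φ (c t)) (Pi.single 5 1) = A5 := by
    rw [← rot_single5 φ, E]
  refine ⟨?_, ?_, ?_, ?_, ?_, ?_, ?_⟩
  · rintro ⟨ha, hb, hz⟩
    simp only at ha hb hz
    apply hQ
    rw [← Qf_rot φ (c t)]
    unfold Qf
    rw [ha, hb, hz]
    ring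
  · rw [k3]
    have H := (h0.mul_const (Real.cos φ)).sub (h1.mul_const (Real.sin φ))
    have hd : Real.cos φ * A3 - Real.sin φ * A4 = A3 * Real.cos φ - A4 * Real.sin φ := by ring
    rw [hd]
    exact H.congr_of_eventuallyEq (Filter.Eventually.of_forall fun τ => Rot0 φ (c τ))
  · rw [k4]
    have H := (h0.mul_const (Real.sin φ)).add (h1.mul_const (Real.cos φ))
    have hd : Real.sin φ * A3 + Real.cos φ * A4 = A3 * Real.sin φ + A4 * Real.cos φ := by ring
    rw [hd]
    exact H.congr_of_eventuallyEq (Filter.Eventually.of_forall fun τ => Rot1 φ (c τ))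
  · rw [k5]
    exact h2.congr_of_eventuallyEq (Filter.Eventually.of_forall fun τ => Rot2 φ (c τ))
  · rw [k0]
    have H := (h3.mul_const (Real.cos φ)).sub (h4.mul_const (Real.sin φ))
    have hd : -(Real.cos φ * A0 - Real.sin φ * A1)
        = -A0 * Real.cos φ - -A1 * Real.sin φ := by ring
    rw [hd]
    exact H.congr_of_eventuallyEq (Filter.Eventually.of_forall fun τ => Rot3 φ (c τ))
  · rw [k1]
    have H := (h3.mul_const (Real.sin φ)).add (h4.mul_const (Real.cos φ))
    have hd : -(Real.sin φ * A0 + Real.cos φ * A1)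
        = -A0 * Real.sin φ + -A1 * Real.cos φ := by ring
    rw [hd]
    exact H.congr_of_eventuallyEq (Filter.Eventually.of_forall fun τ => Rot4 φ (c τ))
  · rw [k2]
    exact h5.congr_of_eventuallyEq (Filter.Eventually.of_forall fun τ => Rot5 φ (c τ))
end

section
/- The only solutions of the Kepler-Heisenberg system contained in the xy-plane are lines through the origin: if c is a solution with z(t) = 0 for all t in its interval of definition, then x(t)·ẏ(t) − y(t)·ẋ(t) = 0 for all t, and there exists (a, b) ∈ ℝ² with (a, b) ≠ (0, 0) such that a·x(t) + b·y(t) = 0 for all t. -/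
/-!
In the plane `z = 0` Hamilton's equation `ż = ∂H/∂p_z = (x P_Y - y P_X) / 2 = (x ẏ - y ẋ) / 2`
forces the Wronskian `x ẏ - y ẋ` of the planar motion to vanish. A curve in `ℝ² ∖ {0}` with
vanishing Wronskian keeps its direction: for `t₀` fixed, `(y(t₀) x - x(t₀) y)² / (x² + y²)` has
zero derivative and vanishes at `t₀`, hence everywhere.
-/

theorem cross_eq_zero_of_wronskian_eq_zero {x y x' y' : ℝ → ℝ} {I : Set ℝ} (hI : IsOpen I)
    (hI' : IsPreconnected I) (hx : ∀ t ∈ I, HasDerivAt x (x' t) t)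
    (hy : ∀ t ∈ I, HasDerivAt y (y' t) t) (hW : ∀ t ∈ I, x t * y' t - y t * x' t = 0)
    (hxy : ∀ t ∈ I, (x t, y t) ≠ (0, 0)) {t₀ t : ℝ} (ht₀ : t₀ ∈ I) (ht : t ∈ I) :
    y t₀ * x t - x t₀ * y t = 0 := by
  have hr : ∀ s ∈ I, x s ^ 2 + y s ^ 2 ≠ 0 := fun s hs h => hxy s hs <| by
    rw [sq, sq, mul_self_add_mul_self_eq_zero] at h
    rw [h.1, h.2]
  -- the derivative of `g` is `-2 (y t₀ x - x t₀ y)(x t₀ x + y t₀ y)(x y' - y x') / (x² + y²)²`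
  set g : ℝ → ℝ := fun s => (y t₀ * x s - x t₀ * y s) ^ 2 / (x s ^ 2 + y s ^ 2)
  have hg : ∀ s ∈ I, HasDerivAt g 0 s := by
    intro s hs
    have hnum : HasDerivAt (fun s => (y t₀ * x s - x t₀ * y s) ^ 2)
        (2 * (y t₀ * x s - x t₀ * y s) * (y t₀ * x' s - x t₀ * y' s)) s := by
      simpa using (((hx s hs).const_mul (y t₀)).fun_sub ((hy s hs).const_mul (x t₀))).fun_pow 2
    have hden : HasDerivAt (fun s => x s ^ 2 + y s ^ 2) (2 * x s * x' s + 2 * y s * y' s) s := by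
      simpa using ((hx s hs).fun_pow 2).fun_add ((hy s hs).fun_pow 2)
    refine (hnum.fun_div hden (hr s hs)).congr_deriv (div_eq_zero_iff.mpr (Or.inl ?_))
    linear_combination (-2) * (y t₀ * x s - x t₀ * y s) * (x t₀ * x s + y t₀ * y s) * hW s hs
  have hconst : g t = g t₀ := hI.is_const_of_deriv_eq_zero hI'
    (fun s hs => (hg s hs).differentiableAt.differentiableWithinAt)
    (fun s hs => (hg s hs).deriv) ht ht₀
  have hgt₀ : g t₀ = 0 := by simp only [g]; ring
  rw [hgt₀, div_eq_zero_iff, or_iff_left (hr t ht)] at hconst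
  exact pow_eq_zero_iff two_ne_zero |>.mp hconst

theorem exists_line_of_wronskian_eq_zero {x y x' y' : ℝ → ℝ} {I : Set ℝ} (hI : IsOpen I)
    (hI' : IsPreconnected I) (hx : ∀ t ∈ I, HasDerivAt x (x' t) t)
    (hy : ∀ t ∈ I, HasDerivAt y (y' t) t) (hW : ∀ t ∈ I, x t * y' t - y t * x' t = 0)
    (hxy : ∀ t ∈ I, (x t, y t) ≠ (0, 0)) :
    ∃ a b : ℝ, (a, b) ≠ (0, 0) ∧ ∀ t ∈ I, a * x t + b * y t = 0 := by
  rcases I.eq_empty_or_nonempty with rfl | ⟨t₀, ht₀⟩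
  · exact ⟨1, 0, by simp, by simp⟩
  refine ⟨y t₀, -x t₀, fun h => hxy t₀ ht₀ ?_, fun t ht => ?_⟩
  · simp_all
  · linear_combination cross_eq_zero_of_wronskian_eq_zero hI hI' hx hy hW hxy ht₀ ht

theorem Qf_ne_zero_s10 {p : Fin 6 → ℝ} (hp : ¬(p 0 = 0 ∧ p 1 = 0 ∧ p 2 = 0)) : Qf p ≠ 0 := by
  intro h
  unfold Qf at h
  have hz : p 2 = 0 := by nlinarith [sq_nonneg (p 0 ^ 2 + p 1 ^ 2), sq_nonneg (p 2)]
  have hxy : p 0 * p 0 + p 1 * p 1 = 0 := by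
    rw [hz] at h; nlinarith [sq_nonneg (p 0), sq_nonneg (p 1)]
  obtain ⟨hx, hy⟩ := mul_self_add_mul_self_eq_zero.mp hxy
  exact hp ⟨hx, hy, hz⟩

open ContinuousLinearMap in
theorem fderiv_Ham_momentum {q : Fin 6 → ℝ} (hq : Qf q ≠ 0) :
    fderiv ℝ Ham q (Pi.single 3 1) = PX q ∧
    fderiv ℝ Ham q (Pi.single 4 1) = PY q ∧
    fderiv ℝ Ham q (Pi.single 5 1) = (1 / 2) * (q 0 * PY q - q 1 * PX q) := by
  have hp (i : Fin 6) := hasFDerivAt_apply (𝕜 := ℝ) i q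
  have hPX : HasFDerivAt PX _ q := (hp 3).sub (((hp 1).const_mul (1 / 2 : ℝ)).mul (hp 5))
  have hPY : HasFDerivAt PY _ q := (hp 4).add (((hp 0).const_mul (1 / 2 : ℝ)).mul (hp 5))
  have hQ : HasFDerivAt Qf _ q := ((((hp 0).pow 2).add ((hp 1).pow 2)).pow 2).add
    (((hp 2).pow 2).const_mul 16)
  have hH : HasFDerivAt Ham _ q := (((hPX.pow 2).add (hPY.pow 2)).const_mul (1 / 2 : ℝ)).sub
    (((Real.hasDerivAt_rpow_const (Or.inl hq)).comp_hasFDerivAt q hQ).const_mul (1 / (8 * Real.pi)))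
  rw [hH.fderiv]
  refine ⟨?_, ?_, ?_⟩ <;>
    simp only [PX, PY, sub_apply, add_apply, smul_apply, proj_apply, Pi.single_apply,
      smul_eq_mul, nsmul_eq_mul, Fin.reduceEq, if_true, if_false] <;> ring

theorem IsSolutionOn.hasDerivAt_position {c : ℝ → Fin 6 → ℝ} {I : Set ℝ} (hc : IsSolutionOn c I)
    {t : ℝ} (ht : t ∈ I) :
    HasDerivAt (fun τ => c τ 0) (PX (c t)) t ∧ HasDerivAt (fun τ => c τ 1) (PY (c t)) t ∧
      HasDerivAt (fun τ => c τ 2) ((1 / 2) * (c t 0 * PY (c t) - c t 1 * PX (c t))) t := by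
  obtain ⟨hpos, hx, hy, hz, -⟩ := hc.2.2 t ht
  obtain ⟨ex, ey, ez⟩ := fderiv_Ham_momentum (Qf_ne_zero_s10 hpos)
  exact ⟨ex ▸ hx, ey ▸ hy, ez ▸ hz⟩

/-- The only solutions of the Kepler–Heisenberg system contained in the `xy`-plane are
lines through the origin: `x ẏ - y ẋ = 0` along the solution, and the projection to the
`xy`-plane lies on a line `a x + b y = 0` through the origin. -/
theorem kh_planar_solutions_are_lines (c : ℝ → Fin 6 → ℝ) (I : Set ℝ)
    (hc : IsSolutionOn c I) (hz : ∀ t ∈ I, c t 2 = 0) :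
    (∀ t ∈ I,
      c t 0 * deriv (fun τ => c τ 1) t - c t 1 * deriv (fun τ => c τ 0) t = 0) ∧
    ∃ a b : ℝ, (a, b) ≠ (0, 0) ∧ ∀ t ∈ I, a * c t 0 + b * c t 1 = 0 := by
  obtain ⟨hI, hI', hsol⟩ := id hc
  have hx t (ht : t ∈ I) := (hc.hasDerivAt_position ht).1
  have hy t (ht : t ∈ I) := (hc.hasDerivAt_position ht).2.1
  have hW : ∀ t ∈ I, c t 0 * PY (c t) - c t 1 * PX (c t) = 0 := by
    intro t ht
    have hz_const : HasDerivAt (fun τ => c τ 2) 0 t :=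
      (hasDerivAt_const t 0).congr_of_eventuallyEq (Filter.eventually_of_mem (hI.mem_nhds ht) hz)
    linarith [hz_const.unique (hc.hasDerivAt_position ht).2.2]
  refine ⟨fun t ht => (hx t ht).deriv ▸ (hy t ht).deriv ▸ hW t ht, ?_⟩
  refine exists_line_of_wronskian_eq_zero hI hI' hx hy hW fun t ht h => (hsol t ht).1 ?_
  obtain ⟨h0, h1⟩ := Prod.mk.inj h
  exact ⟨h0, h1, hz t ht⟩
end

section
/- The Kepler-Heisenberg system admits a family of stationary orbits on the z-axis whose vertical momentum grows linearly: for every z₀ > 0 and every a ∈ ℝ, the curve c : ℝ → ℝ⁶ given by c(t) = (0, 0, z₀, 0, 0, a − t/(32π·z₀²)) is a solution of the Kepler-Heisenberg system; its position is constant while p_z decreases linearly in time. -/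
open ContinuousLinearMap Real

lemma hasFDerivAt_Qf (p : Fin 6 → ℝ) :
    HasFDerivAt Qf ((4 * (p 0 ^ 2 + p 1 ^ 2) * p 0) • proj 0 + (4 * (p 0 ^ 2 + p 1 ^ 2) * p 1) • proj 1
      + (32 * p 2) • proj 2 : (Fin 6 → ℝ) →L[ℝ] ℝ) p := by
  have h (i : Fin 6) := hasFDerivAt_apply (𝕜 := ℝ) i p
  refine ((((h 0).pow 2).add ((h 1).pow 2)).pow 2 |>.add (((h 2).pow 2).const_mul 16)).congr_fderiv ?_
  ext v
  simp only [Pi.add_apply, Nat.add_one_sub_one, pow_one, smul_add, nsmul_eq_mul, Nat.cast_ofNat,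
    add_apply, smul_apply, proj_apply, smul_eq_mul]
  ring

lemma differentiableAt_PX (p : Fin 6 → ℝ) : DifferentiableAt ℝ PX p := by
  unfold PX; fun_prop

lemma differentiableAt_PY (p : Fin 6 → ℝ) : DifferentiableAt ℝ PY p := by
  unfold PY; fun_prop

lemma hasFDerivAt_Ham {p : Fin 6 → ℝ} {PX' PY' Q' : (Fin 6 → ℝ) →L[ℝ] ℝ}
    (hPX : HasFDerivAt PX PX' p) (hPY : HasFDerivAt PY PY' p) (hQf : HasFDerivAt Qf Q' p)
    (hQ : Qf p ≠ 0) :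
    HasFDerivAt Ham (PX p • PX' + PY p • PY' + (Qf p ^ (-(3/2) : ℝ) / (16 * π)) • Q') p := by
  refine (((hPX.pow 2).add (hPY.pow 2)).const_mul (1/2 : ℝ) |>.sub
    ((hQf.rpow_const (p := -(1/2)) (Or.inl hQ)).const_mul (1 / (8 * π)))).congr_fderiv ?_
  ext v
  norm_num
  ring

lemma rpow_neg_three_halves_sq {x : ℝ} (hx : 0 ≤ x) : (x ^ 2) ^ (-(3/2) : ℝ) = (x ^ 3)⁻¹ := by
  rw [rpow_neg (by positivity), ← rpow_natCast_mul hx]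
  norm_num

lemma fderiv_Ham_z_axis {z : ℝ} (hz : 0 < z) (b : ℝ) :
    fderiv ℝ Ham ![0, 0, z, 0, 0, b] = (32 * π * z ^ 2)⁻¹ • proj 2 := by
  have hQ : Qf ![0, 0, z, 0, 0, b] = (4 * z) ^ 2 := by
    simp only [Qf, Matrix.cons_val_zero, Matrix.cons_val_one, Matrix.cons_val]
    ring
  rw [(hasFDerivAt_Ham (differentiableAt_PX _).hasFDerivAt (differentiableAt_PY _).hasFDerivAt
    (hasFDerivAt_Qf _) (by rw [hQ]; positivity)).fderiv, hQ, rpow_neg_three_halves_sq (by positivity)]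
  ext v
  simp only [PX, PY, Matrix.cons_val, Matrix.cons_val_one, Matrix.cons_val_zero, mul_zero, zero_mul,
    sub_self, zero_smul, add_zero, zero_add, smul_apply, proj_apply, smul_eq_mul]
  field_simp
  ring

/-- The Kepler–Heisenberg system admits a family of stationary orbits on the `z`-axis
whose vertical momentum decreases linearly: for `z₀ > 0` and `a ∈ ℝ`, the curve
`t ↦ (0, 0, z₀, 0, 0, a - t/(32π z₀²))` is a solution; its position is constant while
`p_z` is linear in time. -/
theorem kh_stationary_z_axis_orbit (z0 : ℝ) (hz0 : 0 < z0) (a : ℝ) :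
    IsSolutionOn (fun t => ![0, 0, z0, 0, 0, a - t / (32 * Real.pi * z0^2)])
      Set.univ := by
  refine ⟨isOpen_univ, isPreconnected_univ, fun t _ => ?_⟩
  simp only [fderiv_Ham_z_axis hz0]
  refine ⟨fun h => hz0.ne' h.2.2, ?_, ?_, ?_, ?_, ?_, ?pz⟩
  case pz =>
    refine (((hasDerivAt_id t).div_const (32 * π * z0 ^ 2)).const_sub a).congr_deriv ?_
    simp
  all_goals simp [hasDerivAt_const]
end

section
/- Every periodic solution of the Kepler-Heisenberg system has zero dilational momentum: if c : ℝ → ℝ⁶ is a solution and there exists T > 0 with c(t + T) = c(t) for all t, then J(c(t)) = x(t)·p_x(t) + y(t)·p_y(t) + 2z(t)·p_z(t) = 0 for all t. -/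
/-- The dilational momentum `J = x p_x + y p_y + 2 z p_z`. -/
noncomputable def Jmom (p : Fin 6 → ℝ) : ℝ := p 0 * p 3 + p 1 * p 4 + 2 * p 2 * p 5

/-! Along a solution the energy `H` and the angular momentum `L = x p_y - y p_x` are conserved,
and `J̇ = 2H` because the potential is homogeneous of degree `-2` under the dilations
`(x, y, z) ↦ (λx, λy, λ²z)`. A periodic function whose derivative has constant sign is constant;
applied to `J` this gives `H = 0`, hence `J` is constant. The same principle applies to
`F = Q^{-1/2} - 4πL p_z`, whose derivative is `-2J (x² + y²) Q^{-3/2}` (the `L z` terms coming from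
`Q̇` and from `ṗ_z` cancel). So `J ≠ 0` would force `x = y = 0` along the orbit, hence
`P_X = ẋ = 0` and `P_Y = ẏ = 0`, and then `H = -Q^{-1/2}/(8π) < 0`, contradicting `H = 0`. -/

open Real Function

theorem Monotone.eq_of_periodic {f : ℝ → ℝ} {T : ℝ} (hm : Monotone f) (hf : Periodic f T)
    (hT : 0 < T) (x : ℝ) : f x = f 0 := by
  obtain ⟨y, hy, hxy⟩ := hf.exists_mem_Ico₀ hT x
  rw [hxy]
  exact le_antisymm (hf.eq ▸ hm hy.2.le) (hm hy.1)

theorem Function.Periodic.hasDerivAt_eq_zero_of_nonneg {f f' : ℝ → ℝ} {T : ℝ}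
    (hf : Periodic f T) (hT : 0 < T) (hd : ∀ t, HasDerivAt f (f' t) t) (hnn : ∀ t, 0 ≤ f' t)
    (t : ℝ) : f' t = 0 := by
  have hconst : f = fun _ => f 0 :=
    funext ((monotone_of_hasDerivAt_nonneg hd hnn).eq_of_periodic hf hT)
  exact (hd t).unique (hconst ▸ hasDerivAt_const t (f 0))

theorem Function.Periodic.hasDerivAt_mul_eq_zero {f g : ℝ → ℝ} {a T : ℝ}
    (hf : Periodic f T) (hT : 0 < T) (hd : ∀ t, HasDerivAt f (a * g t) t) (hg : ∀ t, 0 ≤ g t)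
    (t : ℝ) : a * g t = 0 := by
  rcases le_total 0 a with ha | ha
  · exact hf.hasDerivAt_eq_zero_of_nonneg hT hd (fun s => mul_nonneg ha (hg s)) t
  · have hneg : ∀ s, HasDerivAt (-f) (-(a * g s)) s := fun s => (hd s).neg
    simpa using (hf.comp Neg.neg).hasDerivAt_eq_zero_of_nonneg hT hneg
      (fun s => neg_nonneg.2 (mul_nonpos_of_nonpos_of_nonneg ha (hg s))) t

theorem eq_of_hasDerivAt_eq_zero {f : ℝ → ℝ} (hd : ∀ t, HasDerivAt f 0 t) (x y : ℝ) :
    f x = f y :=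
  is_const_of_deriv_eq_zero (fun t => (hd t).differentiableAt) (fun t => (hd t).deriv) x y

namespace KeplerHeisenberg

/-- `∂H/∂x`, `∂H/∂y`, `∂H/∂z`, `∂H/∂p_z`; `Q^{-3/2}` is written `Q^{-1/2} / Q`. -/
noncomputable def dHdx (p : Fin 6 → ℝ) : ℝ :=
  PY p * p 5 / 2 + p 0 * (p 0 ^ 2 + p 1 ^ 2) * Qf p ^ (-(1/2) : ℝ) / (4 * π * Qf p)

noncomputable def dHdy (p : Fin 6 → ℝ) : ℝ :=
  -(PX p * p 5 / 2) + p 1 * (p 0 ^ 2 + p 1 ^ 2) * Qf p ^ (-(1/2) : ℝ) / (4 * π * Qf p)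

noncomputable def dHdz (p : Fin 6 → ℝ) : ℝ := 2 * p 2 * Qf p ^ (-(1/2) : ℝ) / (π * Qf p)

noncomputable def dHdpz (p : Fin 6 → ℝ) : ℝ := (p 0 * PY p - p 1 * PX p) / 2

theorem Qf_pos {p : Fin 6 → ℝ} (h : ¬ (p 0 = 0 ∧ p 1 = 0 ∧ p 2 = 0)) : 0 < Qf p := by
  refine lt_of_le_of_ne (by unfold Qf; positivity) (fun hQ => h ?_)
  have hQ' : (p 0 ^ 2 + p 1 ^ 2) ^ 2 + 16 * p 2 ^ 2 = 0 := hQ.symm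
  obtain ⟨h01, h2⟩ : p 0 ^ 2 + p 1 ^ 2 = 0 ∧ p 2 = 0 := by
    simpa using (add_eq_zero_iff_of_nonneg (by positivity) (by positivity)).1 hQ'
  simpa [h2] using (add_eq_zero_iff_of_nonneg (sq_nonneg _) (sq_nonneg _)).1 h01

theorem fderiv_Ham_single {p : Fin 6 → ℝ} (hq : 0 < Qf p) :
    fderiv ℝ Ham p (Pi.single 0 1) = dHdx p ∧ fderiv ℝ Ham p (Pi.single 1 1) = dHdy p ∧
    fderiv ℝ Ham p (Pi.single 2 1) = dHdz p ∧ fderiv ℝ Ham p (Pi.single 3 1) = PX p ∧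
    fderiv ℝ Ham p (Pi.single 4 1) = PY p ∧ fderiv ℝ Ham p (Pi.single 5 1) = dHdpz p := by
  have hcoord (i : Fin 6) := hasFDerivAt_apply (𝕜 := ℝ) i p
  have hsq (i : Fin 6) := (hcoord i).pow 2
  have hPX : HasFDerivAt PX _ p := (hcoord 3).sub (((hcoord 1).const_mul (1/2 : ℝ)).mul (hcoord 5))
  have hPY : HasFDerivAt PY _ p := (hcoord 4).add (((hcoord 0).const_mul (1/2 : ℝ)).mul (hcoord 5))
  have hQ : HasFDerivAt Qf _ p := (((hsq 0).add (hsq 1)).pow 2).add ((hsq 2).const_mul (16 : ℝ))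
  have hw := (Real.hasDerivAt_rpow_const (p := -(1/2)) (Or.inl hq.ne')).comp_hasFDerivAt p hQ
  have hH : HasFDerivAt Ham _ p :=
    ((hPX.pow 2).add (hPY.pow 2)).const_mul (1/2 : ℝ) |>.sub (hw.const_mul (1 / (8 * π)))
  rw [hH.fderiv, Real.rpow_sub_one hq.ne']
  refine ⟨?_, ?_, ?_, ?_, ?_, ?_⟩ <;>
    simp [dHdx, dHdy, dHdz, dHdpz, PX, PY] <;> ring

structure SolvesEquations (c : ℝ → Fin 6 → ℝ) : Prop where
  Qf_pos : ∀ t, 0 < Qf (c t)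
  x : ∀ t, HasDerivAt (fun τ => c τ 0) (PX (c t)) t
  y : ∀ t, HasDerivAt (fun τ => c τ 1) (PY (c t)) t
  z : ∀ t, HasDerivAt (fun τ => c τ 2) (dHdpz (c t)) t
  px : ∀ t, HasDerivAt (fun τ => c τ 3) (-dHdx (c t)) t
  py : ∀ t, HasDerivAt (fun τ => c τ 4) (-dHdy (c t)) t
  pz : ∀ t, HasDerivAt (fun τ => c τ 5) (-dHdz (c t)) t

theorem _root_.IsSolutionOn.solvesEquations {c : ℝ → Fin 6 → ℝ}
    (hc : IsSolutionOn c Set.univ) : SolvesEquations c := by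
  obtain ⟨-, -, hsol⟩ := hc
  have hq (t : ℝ) : 0 < Qf (c t) := Qf_pos (hsol t trivial).1
  have heqs (t : ℝ) := And.intro (fderiv_Ham_single (hq t)) (hsol t trivial).2
  refine ⟨hq, ?_, ?_, ?_, ?_, ?_, ?_⟩ <;> intro t <;>
    obtain ⟨⟨e0, e1, e2, e3, e4, e5⟩, d0, d1, d2, d3, d4, d5⟩ := heqs t
  exacts [e3 ▸ d0, e4 ▸ d1, e5 ▸ d2, e0 ▸ d3, e1 ▸ d4, e2 ▸ d5]

noncomputable def angMom (p : Fin 6 → ℝ) : ℝ := p 0 * p 4 - p 1 * p 3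

namespace SolvesEquations

variable {c : ℝ → Fin 6 → ℝ}

theorem hasDerivAt_Qf (hc : SolvesEquations c) (t : ℝ) :
    HasDerivAt (fun τ => Qf (c τ))
    (4 * (c t 0 ^ 2 + c t 1 ^ 2) * Jmom (c t) + 16 * angMom (c t) * c t 2) t := by
  have h : HasDerivAt (fun τ => Qf (c τ)) _ t :=
    ((((hc.x t).fun_pow 2).add ((hc.y t).fun_pow 2)).fun_pow 2).add
      (((hc.z t).fun_pow 2).const_mul 16)
  refine h.congr_deriv ?_
  simp only [dHdpz, PX, PY, Jmom, angMom, Pi.add_apply]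
  push_cast
  ring

theorem hasDerivAt_Qf_rpow (hc : SolvesEquations c) (t : ℝ) :
    HasDerivAt (fun τ => Qf (c τ) ^ (-(1/2) : ℝ))
    (-2 * (Qf (c t) ^ (-(1/2) : ℝ) / Qf (c t)) *
      ((c t 0 ^ 2 + c t 1 ^ 2) * Jmom (c t) + 4 * angMom (c t) * c t 2)) t := by
  have hq := (hc.Qf_pos t).ne'
  refine ((Real.hasDerivAt_rpow_const (Or.inl hq)).comp t (hc.hasDerivAt_Qf t)).congr_deriv ?_
  rw [Real.rpow_sub_one hq]
  ring

theorem hasDerivAt_Ham (hc : SolvesEquations c) (t : ℝ) :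
    HasDerivAt (fun τ => Ham (c τ)) 0 t := by
  have hPX : HasDerivAt (fun τ => PX (c τ)) _ t :=
    (hc.px t).sub (((hc.y t).const_mul (1/2 : ℝ)).mul (hc.pz t))
  have hPY : HasDerivAt (fun τ => PY (c τ)) _ t :=
    (hc.py t).add (((hc.x t).const_mul (1/2 : ℝ)).mul (hc.pz t))
  have h : HasDerivAt (fun τ => Ham (c τ)) _ t :=
    (((hPX.fun_pow 2).add (hPY.fun_pow 2)).const_mul (1/2 : ℝ)).sub
      ((hc.hasDerivAt_Qf_rpow t).const_mul (1 / (8 * π)))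
  refine h.congr_deriv ?_
  simp only [dHdx, dHdy, dHdz, PX, PY, Jmom, angMom]
  field_simp
  ring

theorem hasDerivAt_Jmom (hc : SolvesEquations c) (t : ℝ) :
    HasDerivAt (fun τ => Jmom (c τ)) (2 * Ham (c t)) t := by
  have h : HasDerivAt (fun τ => Jmom (c τ)) _ t :=
    (((hc.x t).mul (hc.px t)).add ((hc.y t).mul (hc.py t))).add
      (((hc.z t).const_mul 2).mul (hc.pz t))
  refine h.congr_deriv ?_
  have hq := (hc.Qf_pos t).ne'
  simp only [Qf] at hq
  simp only [Ham, dHdx, dHdy, dHdz, dHdpz, PX, PY, Qf]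
  field_simp
  ring

theorem hasDerivAt_angMom (hc : SolvesEquations c) (t : ℝ) :
    HasDerivAt (fun τ => angMom (c τ)) 0 t := by
  have h : HasDerivAt (fun τ => angMom (c τ)) _ t :=
    ((hc.x t).mul (hc.py t)).sub ((hc.y t).mul (hc.px t))
  refine h.congr_deriv ?_
  simp only [dHdx, dHdy, PX, PY]
  field_simp
  ring

theorem hasDerivAt_Qf_rpow_sub_angMom_mul_pz (hc : SolvesEquations c) (t : ℝ) :
    HasDerivAt (fun τ => Qf (c τ) ^ (-(1/2) : ℝ) - 4 * π * angMom (c 0) * c τ 5)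
      (-2 * Jmom (c t) * ((c t 0 ^ 2 + c t 1 ^ 2) * (Qf (c t) ^ (-(1/2) : ℝ) / Qf (c t)))) t := by
  refine ((hc.hasDerivAt_Qf_rpow t).sub ((hc.pz t).const_mul _)).congr_deriv ?_
  rw [eq_of_hasDerivAt_eq_zero hc.hasDerivAt_angMom t 0, dHdz]
  field_simp
  ring

theorem Ham_neg_of_forall_xy_eq_zero (hc : SolvesEquations c)
    (hxy : ∀ t, c t 0 = 0 ∧ c t 1 = 0) (t : ℝ) : Ham (c t) < 0 := by
  have hPX : PX (c t) = 0 :=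
    (hc.x t).unique (by simp only [fun s => (hxy s).1]; exact hasDerivAt_const t 0)
  have hPY : PY (c t) = 0 :=
    (hc.y t).unique (by simp only [fun s => (hxy s).2]; exact hasDerivAt_const t 0)
  have hw : 0 < Qf (c t) ^ (-(1/2) : ℝ) := Real.rpow_pos_of_pos (hc.Qf_pos t) _
  rw [Ham, hPX, hPY]
  norm_num
  positivity

theorem Ham_eq_zero_of_periodic (hc : SolvesEquations c) {T : ℝ} (hper : Periodic c T)
    (hT : 0 < T) (t : ℝ) : Ham (c t) = 0 := by
  have hH (s : ℝ) : Ham (c s) = Ham (c 0) := eq_of_hasDerivAt_eq_zero hc.hasDerivAt_Ham s 0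
  have h := Periodic.hasDerivAt_mul_eq_zero (f := fun s => Jmom (c s)) (g := fun _ => 1)
    (hper.comp Jmom) hT (fun s => by simpa [hH s] using hc.hasDerivAt_Jmom s)
    (fun _ => zero_le_one) 0
  rw [hH t]
  simpa using h

theorem Jmom_eq_of_periodic (hc : SolvesEquations c) {T : ℝ} (hper : Periodic c T)
    (hT : 0 < T) (t : ℝ) : Jmom (c t) = Jmom (c 0) :=
  eq_of_hasDerivAt_eq_zero
    (fun s => by simpa [hc.Ham_eq_zero_of_periodic hper hT s] using hc.hasDerivAt_Jmom s) t 0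

theorem xy_eq_zero_of_periodic (hc : SolvesEquations c) {T : ℝ} (hper : Periodic c T)
    (hT : 0 < T) (hJ0 : Jmom (c 0) ≠ 0) (t : ℝ) : c t 0 = 0 ∧ c t 1 = 0 := by
  have hw (s : ℝ) : 0 < Qf (c s) ^ (-(1/2) : ℝ) / Qf (c s) :=
    div_pos (Real.rpow_pos_of_pos (hc.Qf_pos s) _) (hc.Qf_pos s)
  have h := Periodic.hasDerivAt_mul_eq_zero
    (f := fun s => Qf (c s) ^ (-(1/2) : ℝ) - 4 * π * angMom (c 0) * c s 5)
    (a := -2 * Jmom (c 0))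
    (g := fun s => (c s 0 ^ 2 + c s 1 ^ 2) * (Qf (c s) ^ (-(1/2) : ℝ) / Qf (c s)))
    (hper.comp fun p => Qf p ^ (-(1/2) : ℝ) - 4 * π * angMom (c 0) * p 5) hT
    (fun s => by
      rw [← hc.Jmom_eq_of_periodic hper hT s]
      exact hc.hasDerivAt_Qf_rpow_sub_angMom_mul_pz s)
    (fun s => mul_nonneg (by positivity) (hw s).le) t
  have hr := (mul_eq_zero.1 ((mul_eq_zero.1 h).resolve_left (by simpa using hJ0))).resolve_right
    (hw t).ne'
  rw [sq, sq] at hr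
  exact mul_self_add_mul_self_eq_zero.1 hr

end SolvesEquations

end KeplerHeisenberg

/-- Every periodic solution of the Kepler–Heisenberg system has zero dilational
momentum `J = x p_x + y p_y + 2 z p_z`. -/
theorem kh_periodic_zero_J (c : ℝ → Fin 6 → ℝ)
    (hc : IsSolutionOn c Set.univ) (T : ℝ) (hT : 0 < T)
    (hper : ∀ t, c (t + T) = c t) :
    ∀ t, Jmom (c t) = 0 := by
  intro t
  replace hc := hc.solvesEquations
  rw [hc.Jmom_eq_of_periodic hper hT t]
  by_contra hJ0
  exact (hc.Ham_neg_of_forall_xy_eq_zero (hc.xy_eq_zero_of_periodic hper hT hJ0) 0).ne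
    (hc.Ham_eq_zero_of_periodic hper hT 0)
end
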